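/- Let R be a reduced root system with base Π, let 𝒦 = 𝒦(Π) be the cascade, and let K ∈ 𝒦. If α, β ∈ Γ^K and α + β ∈ R, then α + β = ε_K. -/

import Mathlib

/-!
Every member `K` of the cascade is a connected component of a subset of `Π`, so `R^K` has a
highest root `ε`: a maximal positive root of `R^K` pairs nonnegatively with `K`, hence has full
support by connectedness, hence pairs positively with any other maximal one, and two distinct
non-orthogonal maximal roots would differ by a root. Now if `α, β ∈ Γ^K` and `α + β` is a root,
then `⟨α + β, ε^∨⟩ = n + 2` with `n ≥ 0`, and `(n + 2) ε - (α + β) = -s_ε(α + β)` is a root of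
`R^K`. Lying below `ε`, it gives `α + β - ε ∈ ℕK` after adding `n ε`, while `ε - (α + β) ∈ ℕK`.
-/

open Finset Module

open scoped Classical

/-- A reduced crystallographic root system in the `k`-vector space `V`, recorded through
the finite set `roots` of roots, the coroot linear forms `corootForm α = ⟨·, α^∨⟩`, and
the integer Cartan pairing `pairInt β α = ⟨β, α^∨⟩ ∈ ℤ` (meaningful when `α, β` are roots). -/
structure RootSystemData (k V : Type*) [Field k] [CharZero k]
    [AddCommGroup V] [Module k V] where
  /-- the (finite) set of roots -/
  roots : Finset V
  /-- `corootForm α` is the linear form `⟨·, α^∨⟩` associated to the coroot of a root `α` -/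
  corootForm : V → V →ₗ[k] k
  /-- the integer `⟨β, α^∨⟩`, recorded as `pairInt β α` -/
  pairInt : V → V → ℤ
  ne_zero : ∀ α ∈ roots, α ≠ (0 : V)
  span_eq_top : Submodule.span k (roots : Set V) = ⊤
  pair_compat : ∀ α ∈ roots, ∀ β ∈ roots, ((pairInt β α : ℤ) : k) = corootForm α β
  pair_self : ∀ α ∈ roots, pairInt α α = 2
  reflect_mem : ∀ α ∈ roots, ∀ β ∈ roots, β - pairInt β α • α ∈ roots
  reduced : ∀ α ∈ roots, ∀ c : k, c • α ∈ roots → c = 1 ∨ c = -1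

namespace RootSystemData

variable {k V : Type*} [Field k] [CharZero k] [AddCommGroup V] [Module k V]
variable (P : RootSystemData k V)

/-- A base (set of simple roots) of the root system: a linearly independent set of roots
such that every root is a nonnegative or nonpositive integral combination of its elements. -/
structure IsBase (B : Finset V) : Prop where
  subset : B ⊆ P.roots
  indep : LinearIndependent k (fun b : B => (b : V))
  pos_or_neg : ∀ α ∈ P.roots,
    α ∈ AddSubmonoid.closure (B : Set V) ∨ -α ∈ AddSubmonoid.closure (B : Set V)

/-- The positive roots `R₊` with respect to a base `B`. -/
noncomputable def posRoots (B : Finset V) : Finset V :=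
  P.roots.filter fun α => α ∈ AddSubmonoid.closure (B : Set V)

/-- `R^S = R ∩ ℤS`. -/
noncomputable def rootsOf (S : Finset V) : Finset V :=
  P.roots.filter fun α => α ∈ AddSubgroup.closure (S : Set V)

/-- `R₊^S = R ∩ ℕS`. -/
noncomputable def posRootsOf (S : Finset V) : Finset V :=
  P.roots.filter fun α => α ∈ AddSubmonoid.closure (S : Set V)

/-- Two simple roots are linked in the Dynkin diagram of `S ⊆ Δ` when they can be joined
by a chain in `S` of consecutively non-orthogonal elements. -/
def Linked (S : Finset V) : V → V → Prop :=
  Relation.ReflTransGen fun a b => a ∈ S ∧ b ∈ S ∧ P.pairInt a b ≠ 0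

/-- A subset of a base is connected if its Dynkin diagram is connected (and nonempty). -/
def IsConnected (S : Finset V) : Prop :=
  S.Nonempty ∧ ∀ a ∈ S, ∀ b ∈ S, P.Linked S a b

/-- `ε` is the highest root of `R^S`: a positive root of `R^S` such that `ε - α ∈ ℕS`
for every root `α ∈ R^S`. -/
def IsHighestRoot (S : Finset V) (ε : V) : Prop :=
  ε ∈ P.posRootsOf S ∧ ∀ α ∈ P.rootsOf S, ε - α ∈ AddSubmonoid.closure (S : Set V)

/-- The highest root `ε_S` of `R^S` (junk value `0` if it does not exist). -/
noncomputable def highestRoot (S : Finset V) : V :=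
  if h : ∃ ε, P.IsHighestRoot S ε then h.choose else 0

/-- The connected component of `a` in the Dynkin diagram of `S`. -/
noncomputable def component (S : Finset V) (a : V) : Finset V :=
  S.filter fun b => P.Linked S a b

/-- The connected components of the Dynkin diagram of `S`. -/
noncomputable def components (S : Finset V) : Finset (Finset V) :=
  S.image fun a => P.component S a

/-- `{α ∈ S : ⟨α, ε_S^∨⟩ = 0}`. -/
noncomputable def zeroPart (S : Finset V) : Finset V :=
  S.filter fun a => P.pairInt a (P.highestRoot S) = 0

/-- Fuel-based auxiliary recursion for the cascade `𝒦(S)`; for an actual root system the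
recursion terminates in at most `card S` steps, so fuel `card S + 1` computes `𝒦(S)`. -/
noncomputable def cascadeAux : ℕ → Finset V → Finset (Finset V)
  | 0, _ => ∅
  | n + 1, S => (P.components S).biUnion fun C => insert C (cascadeAux n (P.zeroPart C))

/-- The cascade `𝒦(S)`, defined recursively by `𝒦(∅) = ∅`,
`𝒦(S) = 𝒦(S₁) ∪ ⋯ ∪ 𝒦(S_r)` if `S` has connected components `S₁, …, S_r`, and
`𝒦(S) = {S} ∪ 𝒦({α ∈ S : ⟨α, ε_S^∨⟩ = 0})` if `S` is connected. -/
noncomputable def cascade (S : Finset V) : Finset (Finset V) :=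
  P.cascadeAux (S.card + 1) S

/-- `Γ^K = {α ∈ R^K : ⟨α, ε_K^∨⟩ > 0}`. -/
noncomputable def gamma (K : Finset V) : Finset V :=
  (P.rootsOf K).filter fun α => 0 < P.pairInt α (P.highestRoot K)

end RootSystemData

variable {k V : Type*} [Field k] [CharZero k] [AddCommGroup V] [Module k V]

theorem AddSubgroup.mem_closure_finset {G : Type*} [AddCommGroup G] {S : Finset G} {x : G} :
    x ∈ AddSubgroup.closure (S : Set G) ↔
      ∃ f : G → ℤ, Function.support f ⊆ S ∧ ∑ a ∈ S, f a • a = x := by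
  rw [← Submodule.span_int_eq_addSubgroupClosure, Submodule.mem_toAddSubgroup,
    Submodule.mem_span_finset]

namespace RootSystemData

section RootPairing

lemma finiteDimensional (P : RootSystemData k V) : FiniteDimensional k V :=
  ⟨⟨P.roots, P.span_eq_top⟩⟩

variable (P : RootSystemData k V)

lemma corootForm_apply_self {α : V} (hα : α ∈ P.roots) : P.corootForm α α = 2 := by
  simpa [P.pair_self α hα] using (P.pair_compat α hα α hα).symm

lemma mapsTo_preReflection {α : V} (hα : α ∈ P.roots) :
    Set.MapsTo (Module.preReflection α (P.corootForm α)) P.roots P.roots := fun β hβ => by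
  simpa [Module.preReflection_apply, ← P.pair_compat α hα β hβ, Int.cast_smul_eq_zsmul]
    using P.reflect_mem α hα β hβ

lemma corootForm_injOn : Set.InjOn P.corootForm P.roots := by
  have : IsAddTorsionFree V := .of_isTorsionFree k V
  intro α hα β hβ h
  have h2 := P.corootForm_apply_self hβ
  exact Module.eq_of_mapsTo_reflection_of_mem P.roots.finite_toSet
    (P.corootForm_apply_self hα) h2 (h ▸ P.corootForm_apply_self hα) (h ▸ h2)
    (P.mapsTo_preReflection hα) (P.mapsTo_preReflection hβ) hβ

noncomputable def toRootPairing : RootPairing P.roots k V (Module.Dual k V) :=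
  have := P.finiteDimensional
  .mk'' (Module.Dual.eval k V) (.subtype _)
    ⟨fun α => P.corootForm α, fun α β h => Subtype.ext (P.corootForm_injOn α.2 β.2 h)⟩
    (fun α => P.corootForm_apply_self α.2)
    (by
      rintro α - ⟨β, rfl⟩
      exact ⟨⟨_, P.mapsTo_preReflection α.2 β.2⟩, rfl⟩)
    (by simpa using P.span_eq_top)

lemma pairing_toRootPairing (α β : P.roots) :
    P.toRootPairing.pairing α β = P.pairInt α β :=
  (P.pair_compat β β.2 α α.2).symm

instance : P.toRootPairing.IsCrystallographic where
  exists_value α β := ⟨P.pairInt α β, by simp [pairing_toRootPairing]⟩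

lemma pairingIn_toRootPairing (α β : P.roots) :
    P.toRootPairing.pairingIn ℤ α β = P.pairInt α β := by
  apply Int.cast_injective (α := k)
  simpa [pairing_toRootPairing] using P.toRootPairing.algebraMap_pairingIn ℤ α β

lemma mem_range_toRootPairing_root {x : V} : x ∈ Set.range P.toRootPairing.root ↔ x ∈ P.roots :=
  ⟨fun ⟨α, h⟩ => h ▸ α.2, fun h => ⟨⟨x, h⟩, rfl⟩⟩

variable {P}

lemma sub_mem_roots_of_pairInt_pos {α β : V} (hα : α ∈ P.roots) (hβ : β ∈ P.roots)
    (h : 0 < P.pairInt α β) (hne : α ≠ β) : α - β ∈ P.roots :=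
  P.mem_range_toRootPairing_root.mp <| P.toRootPairing.root_sub_root_mem_of_pairingIn_pos
    (i := ⟨α, hα⟩) (j := ⟨β, hβ⟩) (by rwa [pairingIn_toRootPairing]) (by simpa using hne)

lemma add_mem_roots_of_pairInt_neg {α β : V} (hα : α ∈ P.roots) (hβ : β ∈ P.roots)
    (h : P.pairInt α β < 0) (hne : α ≠ -β) : α + β ∈ P.roots :=
  P.mem_range_toRootPairing_root.mp <| P.toRootPairing.root_add_root_mem_of_pairingIn_neg
    (i := ⟨α, hα⟩) (j := ⟨β, hβ⟩) (by rwa [pairingIn_toRootPairing]) hne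

lemma pairInt_eq_zero_comm {α β : V} (hα : α ∈ P.roots) (hβ : β ∈ P.roots) :
    P.pairInt α β = 0 ↔ P.pairInt β α = 0 := by
  simpa only [pairingIn_toRootPairing] using
    P.toRootPairing.pairingIn_eq_zero_iff (S := ℤ) (i := ⟨α, hα⟩) (j := ⟨β, hβ⟩)

lemma pairInt_neg_comm {α β : V} (hα : α ∈ P.roots) (hβ : β ∈ P.roots) :
    P.pairInt α β < 0 ↔ P.pairInt β α < 0 := by
  simpa only [pairingIn_toRootPairing] using
    P.toRootPairing.pairingIn_lt_zero_iff ℤ (i := ⟨α, hα⟩) (j := ⟨β, hβ⟩)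

lemma neg_mem_roots {α : V} (hα : α ∈ P.roots) : -α ∈ P.roots := by
  simpa [P.pair_self α hα, two_smul] using P.reflect_mem α hα α hα

lemma pairInt_add {α β γ : V} (hα : α ∈ P.roots) (hβ : β ∈ P.roots) (hαβ : α + β ∈ P.roots)
    (hγ : γ ∈ P.roots) : P.pairInt (α + β) γ = P.pairInt α γ + P.pairInt β γ := by
  apply Int.cast_injective (α := k)
  simp [P.pair_compat γ hγ _ hα, P.pair_compat γ hγ _ hβ, P.pair_compat γ hγ _ hαβ]

lemma pairInt_sum_nsmul {S : Finset V} (hS : S ⊆ P.roots) {n : V → ℕ} {γ : V}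
    (hsum : ∑ a ∈ S, n a • a ∈ P.roots) (hγ : γ ∈ P.roots) :
    P.pairInt (∑ a ∈ S, n a • a) γ = ∑ a ∈ S, n a * P.pairInt a γ := by
  apply Int.cast_injective (α := k)
  simp only [P.pair_compat γ hγ _ hsum, map_sum, map_nsmul, Int.cast_sum, Int.cast_mul,
    Int.cast_natCast, nsmul_eq_mul]
  exact Finset.sum_congr rfl fun a ha => by rw [P.pair_compat γ hγ a (hS ha)]

end RootPairing

namespace IsBase

variable {P : RootSystemData k V} {Δ : Finset V} (hΔ : P.IsBase Δ)
include hΔ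

lemma eq_of_sum_nsmul_eq {m n : V → ℕ} (h : ∑ a ∈ Δ, m a • a = ∑ a ∈ Δ, n a • a) :
    ∀ a ∈ Δ, m a = n a := by
  have hind : LinearIndepOn ℕ id (Δ : Set V) := hΔ.indep.restrict_scalars' ℕ
  exact linearIndepOn_finset_iffₛ.mp hind m n h

lemma eq_of_sum_zsmul_eq {m n : V → ℤ} (h : ∑ a ∈ Δ, m a • a = ∑ a ∈ Δ, n a • a) :
    ∀ a ∈ Δ, m a = n a := by
  have hind : LinearIndepOn ℤ id (Δ : Set V) := hΔ.indep.restrict_scalars' ℤ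
  exact linearIndepOn_finset_iffₛ.mp hind m n h

lemma eq_zero_of_mem_closure_of_neg_mem {x : V} (hx : x ∈ AddSubmonoid.closure (Δ : Set V))
    (hx' : -x ∈ AddSubmonoid.closure (Δ : Set V)) : x = 0 := by
  obtain ⟨m, -, rfl⟩ := AddSubmonoid.mem_closure_finset.mp hx
  obtain ⟨n, -, hn⟩ := AddSubmonoid.mem_closure_finset.mp hx'
  have hmn := hΔ.eq_of_sum_nsmul_eq (m := m + n) (n := 0) (by
    simp [add_smul, Finset.sum_add_distrib, hn])
  exact Finset.sum_eq_zero fun a ha => by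
    simp [Nat.eq_zero_of_add_eq_zero_right (hmn a ha)]

lemma sub_notMem_closure {a b : V} (ha : a ∈ Δ) (hb : b ∈ Δ) (hab : a ≠ b) :
    a - b ∉ AddSubmonoid.closure (Δ : Set V) := by
  intro h
  obtain ⟨n, -, hn⟩ := AddSubmonoid.mem_closure_finset.mp h
  have := hΔ.eq_of_sum_nsmul_eq (m := n + Pi.single b 1) (n := Pi.single a 1) (by
    simp [add_smul, Finset.sum_add_distrib, hn, Pi.single_apply, ite_smul, ha, hb]) b hb
  simp [hab.symm] at this

lemma mem_closure_of_mem_closure_int {S : Finset V} (hS : S ⊆ Δ) {x : V}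
    (hZ : x ∈ AddSubgroup.closure (S : Set V)) (hN : x ∈ AddSubmonoid.closure (Δ : Set V)) :
    x ∈ AddSubmonoid.closure (S : Set V) := by
  obtain ⟨z, hz, rfl⟩ := AddSubgroup.mem_closure_finset.mp hZ
  obtain ⟨n, hn, hnz⟩ := AddSubmonoid.mem_closure_finset.mp hN
  have hz0 : ∀ a ∉ S, z a = 0 := fun a ha => Function.notMem_support.mp (mt (hz ·) ha)
  have hzΔ : ∑ a ∈ S, z a • a = ∑ a ∈ Δ, z a • a :=
    Finset.sum_subset hS fun a _ ha => by simp [hz0 a ha]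
  have hzn := hΔ.eq_of_sum_zsmul_eq (m := fun a => n a) (n := z) (by
    rw [← hzΔ, ← hnz]
    simp [natCast_zsmul])
  have hnS : Function.support n ⊆ S := fun a ha => by
    by_contra haS
    have := hzn a (hn ha)
    simp [hz0 a haS] at this
    exact ha this
  refine AddSubmonoid.mem_closure_finset.mpr ⟨n, hnS, ?_⟩
  rw [Finset.sum_subset hS fun a _ ha => by simp [Function.notMem_support.mp (mt (hnS ·) ha)],
    hnz]

lemma pairInt_nonpos {a b : V} (ha : a ∈ Δ) (hb : b ∈ Δ) (hab : a ≠ b) : P.pairInt a b ≤ 0 := by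
  by_contra! h
  rcases hΔ.pos_or_neg _ (sub_mem_roots_of_pairInt_pos (hΔ.subset ha) (hΔ.subset hb) h hab)
    with h' | h'
  · exact hΔ.sub_notMem_closure ha hb hab h'
  · exact hΔ.sub_notMem_closure hb ha hab.symm (by rwa [neg_sub] at h')

lemma mem_closure_or_neg_mem_closure {S : Finset V} (hS : S ⊆ Δ) {γ : V} (hγ : γ ∈ P.rootsOf S) :
    γ ∈ AddSubmonoid.closure (S : Set V) ∨ -γ ∈ AddSubmonoid.closure (S : Set V) := by
  obtain ⟨hγR, hγZ⟩ := Finset.mem_filter.mp hγ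
  exact (hΔ.pos_or_neg γ hγR).imp (hΔ.mem_closure_of_mem_closure_int hS hγZ)
    (hΔ.mem_closure_of_mem_closure_int hS (neg_mem hγZ))

lemma eq_of_sub_mem_closure {S : Finset V} (hS : S ⊆ Δ) {x y : V}
    (hxy : x - y ∈ AddSubmonoid.closure (S : Set V))
    (hyx : y - x ∈ AddSubmonoid.closure (S : Set V)) : x = y := by
  have hmono := AddSubmonoid.closure_mono (Finset.coe_subset.mpr hS)
  exact sub_eq_zero.mp <| hΔ.eq_zero_of_mem_closure_of_neg_mem (hmono hxy)
    (hmono (by rwa [neg_sub]))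

end IsBase

/-- Connectedness of the Dynkin diagram of `K`, phrased as the absence of orthogonal splittings. -/
def IsIndecomposable (P : RootSystemData k V) (K : Finset V) : Prop :=
  ∀ T ⊆ K, T.Nonempty → (∀ b ∈ T, ∀ a ∈ K \ T, P.pairInt b a = 0) → T = K

def IsMaximalPosRoot (P : RootSystemData k V) (S : Finset V) (ε : V) : Prop :=
  ε ∈ P.posRootsOf S ∧ ∀ γ ∈ P.posRootsOf S, γ - ε ∈ AddSubmonoid.closure (S : Set V) → γ = ε

variable {P : RootSystemData k V}

namespace IsMaximalPosRoot

variable {S : Finset V} {ε : V} (hε : P.IsMaximalPosRoot S ε)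
include hε

lemma root_mem : ε ∈ P.roots := (Finset.mem_filter.mp hε.1).1

lemma mem_closure : ε ∈ AddSubmonoid.closure (S : Set V) := (Finset.mem_filter.mp hε.1).2

end IsMaximalPosRoot

lemma isHighestRoot_highestRoot {S : Finset V} (h : ∃ ε, P.IsHighestRoot S ε) :
    P.IsHighestRoot S (P.highestRoot S) := by
  rw [highestRoot, dif_pos h]
  exact h.choose_spec

section Highest

variable {Δ : Finset V} (hΔ : P.IsBase Δ)
include hΔ

lemma exists_isMaximalPosRoot {S : Finset V} (hS : S ⊆ Δ) {γ : V} (hγ : γ ∈ P.posRootsOf S) :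
    ∃ ε, P.IsMaximalPosRoot S ε ∧ ε - γ ∈ AddSubmonoid.closure (S : Set V) := by
  let _ : Preorder V :=
    { le := fun x y => y - x ∈ AddSubmonoid.closure (S : Set V)
      le_refl := fun x => by simp [zero_mem]
      le_trans := fun x y z hxy hyz => by simpa using add_mem hyz hxy }
  obtain ⟨ε, hγε, hε, hmax⟩ := (P.posRootsOf S).exists_le_maximal hγ
  exact ⟨ε, ⟨hε, fun δ hδ hεδ => hΔ.eq_of_sub_mem_closure hS hεδ (hmax hδ hεδ)⟩, hγε⟩

namespace IsMaximalPosRoot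

variable {K : Finset V} (hK : K ⊆ Δ) {ε : V} (hε : P.IsMaximalPosRoot K ε)
include hK hε

lemma pairInt_nonneg {a : V} (ha : a ∈ K) : 0 ≤ P.pairInt ε a := by
  by_contra! h
  have haK : a ∈ AddSubmonoid.closure (K : Set V) := AddSubmonoid.subset_closure ha
  have ha0 : a ≠ 0 := P.ne_zero a (hΔ.subset (hK ha))
  have hne : ε ≠ -a := by
    rintro rfl
    exact ha0 (neg_eq_zero.mp (hΔ.eq_of_sub_mem_closure hK (by simpa using hε.mem_closure)
      (by simpa using haK)))
  have hεa : ε + a ∈ P.posRootsOf K := Finset.mem_filter.mpr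
    ⟨add_mem_roots_of_pairInt_neg hε.root_mem (hΔ.subset (hK ha)) h hne,
      add_mem hε.mem_closure haK⟩
  exact ha0 (by simpa using hε.2 _ hεa (by simpa using haK))

lemma coeff_ne_zero (hKi : P.IsIndecomposable K) {n : V → ℕ} (hn : ∑ a ∈ K, n a • a = ε) :
    ∀ a ∈ K, n a ≠ 0 := by
  have hKR : K ⊆ P.roots := hK.trans hΔ.subset
  have hsupp : K.filter (n · ≠ 0) = K := by
    refine hKi _ (Finset.filter_subset _ _) ?_ fun b hb a ha => ?_
    · by_contra! h
      refine P.ne_zero ε hε.root_mem (hn ▸ Finset.sum_eq_zero fun a ha => ?_)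
      simp [show n a = 0 by simpa using Finset.filter_eq_empty_iff.mp h ha]
    have haK := (Finset.mem_sdiff.mp ha).1
    have hna : n a = 0 := by simpa [haK] using ha
    have hterm : ∀ e ∈ K, (n e : ℤ) * P.pairInt e a ≤ 0 := fun e he => by
      rcases eq_or_ne e a with rfl | hea
      · simp [hna]
      · exact mul_nonpos_of_nonneg_of_nonpos (by positivity)
          (hΔ.pairInt_nonpos (hK he) (hK haK) hea)
    have hsum : ∑ e ∈ K, (n e : ℤ) * P.pairInt e a = 0 := by
      refine le_antisymm (Finset.sum_nonpos hterm) ?_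
      rw [← pairInt_sum_nsmul hKR (hn ▸ hε.root_mem) (hKR haK), hn]
      exact hε.pairInt_nonneg hΔ hK haK
    obtain ⟨hbK, hnb⟩ : b ∈ K ∧ n b ≠ 0 := by simpa using hb
    simpa [hnb] using (Finset.sum_eq_zero_iff_of_nonpos hterm).mp hsum b hbK
  intro a ha
  rw [← hsupp] at ha
  exact (Finset.mem_filter.mp ha).2

lemma unique (hKi : P.IsIndecomposable K) {ε' : V} (hε' : P.IsMaximalPosRoot K ε') : ε = ε' := by
  by_contra hne
  have hKR : K ⊆ P.roots := hK.trans hΔ.subset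
  have hεR := hε.root_mem
  have hε'R := hε'.root_mem
  obtain ⟨n, -, hn⟩ := AddSubmonoid.mem_closure_finset.mp hε.mem_closure
  obtain ⟨n', -, hn'⟩ := AddSubmonoid.mem_closure_finset.mp hε'.mem_closure
  have hnonneg : ∀ e ∈ K, 0 ≤ P.pairInt e ε' := fun e he => not_lt.mp fun h =>
    (hε'.pairInt_nonneg hΔ hK he).not_gt ((pairInt_neg_comm (hKR he) hε'R).mp h)
  obtain ⟨e, he, hpos⟩ : ∃ e ∈ K, 0 < P.pairInt e ε' := by
    by_contra! h
    have hsum := pairInt_sum_nsmul hKR (hn' ▸ hε'R) hε'R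
    rw [hn', P.pair_self ε' hε'R, Finset.sum_eq_zero fun e he => by
      rw [le_antisymm (h e he) (hnonneg e he), mul_zero]] at hsum
    exact two_ne_zero hsum
  have hεε' : 0 < P.pairInt ε ε' := by
    rw [← hn, pairInt_sum_nsmul hKR (hn ▸ hεR) hε'R]
    exact Finset.sum_pos' (fun e he => mul_nonneg (by positivity) (hnonneg e he))
      ⟨e, he, mul_pos (by have := hε.coeff_ne_zero hΔ hK hKi hn e he; omega) hpos⟩
  have hsub : ε - ε' ∈ P.rootsOf K := Finset.mem_filter.mpr
    ⟨sub_mem_roots_of_pairInt_pos hεR hε'R hεε' hne,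
      sub_mem (AddSubgroup.le_closure_toAddSubmonoid _ hε.mem_closure)
        (AddSubgroup.le_closure_toAddSubmonoid _ hε'.mem_closure)⟩
  rcases hΔ.mem_closure_or_neg_mem_closure hK hsub with h | h
  · exact hne (hε'.2 ε hε.1 h)
  · exact hne (hε.2 ε' hε'.1 (by rwa [neg_sub] at h)).symm

end IsMaximalPosRoot

lemma exists_isHighestRoot {K : Finset V} (hK : K ⊆ Δ) (hKne : K.Nonempty)
    (hKi : P.IsIndecomposable K) : ∃ ε, P.IsHighestRoot K ε := by
  obtain ⟨a, ha⟩ := hKne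
  obtain ⟨ε, hε, -⟩ := exists_isMaximalPosRoot hΔ hK
    (Finset.mem_filter.mpr ⟨hΔ.subset (hK ha), AddSubmonoid.subset_closure ha⟩)
  refine ⟨ε, hε.1, fun α hα => ?_⟩
  rcases hΔ.mem_closure_or_neg_mem_closure hK hα with h | h
  · obtain ⟨ε', hε', hε'α⟩ := exists_isMaximalPosRoot hΔ hK
      (Finset.mem_filter.mpr ⟨(Finset.mem_filter.mp hα).1, h⟩)
    rwa [hε.unique hΔ hK hKi hε']
  · simpa [sub_eq_add_neg] using add_mem hε.mem_closure h

lemma IsHighestRoot.add_eq_of_pairInt_pos {K : Finset V} (hK : K ⊆ Δ) {ε : V}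
    (hε : P.IsHighestRoot K ε) {α β : V} (hα : α ∈ P.rootsOf K) (hβ : β ∈ P.rootsOf K)
    (hαε : 0 < P.pairInt α ε) (hβε : 0 < P.pairInt β ε) (hαβ : α + β ∈ P.roots) :
    α + β = ε := by
  obtain ⟨hεR, hεK⟩ := Finset.mem_filter.mp hε.1
  obtain ⟨hαR, hαK⟩ := Finset.mem_filter.mp hα
  obtain ⟨hβR, hβK⟩ := Finset.mem_filter.mp hβ
  obtain ⟨n, hn⟩ : ∃ n : ℕ, P.pairInt (α + β) ε = n + 2 := by
    rw [pairInt_add hαR hβR hαβ hεR]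
    exact ⟨(P.pairInt α ε + P.pairInt β ε - 2).toNat, by omega⟩
  have hεZ : ε ∈ AddSubgroup.closure (K : Set V) := AddSubgroup.le_closure_toAddSubmonoid _ hεK
  have hrefl : (n + 2 : ℤ) • ε - (α + β) ∈ P.rootsOf K := by
    refine Finset.mem_filter.mpr ⟨?_, sub_mem (zsmul_mem hεZ _) (add_mem hαK hβK)⟩
    simpa [hn] using neg_mem_roots (P.reflect_mem ε hεR _ hαβ)
  refine hΔ.eq_of_sub_mem_closure hK ?_ (hε.2 _ (Finset.mem_filter.mpr ⟨hαβ, add_mem hαK hβK⟩))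
  convert add_mem (hε.2 _ hrefl) (nsmul_mem hεK n) using 1
  module

end Highest

section Cascade

lemma exists_eq_component_of_mem_cascadeAux (P : RootSystemData k V) {n : ℕ} {S K : Finset V}
    (h : K ∈ P.cascadeAux n S) : ∃ S' ⊆ S, ∃ a ∈ S', K = P.component S' a := by
  induction n generalizing S K with
  | zero => simp [cascadeAux] at h
  | succ n ih =>
    obtain ⟨C, hC, hK⟩ := Finset.mem_biUnion.mp h
    obtain ⟨a, ha, rfl⟩ := Finset.mem_image.mp hC
    rcases Finset.mem_insert.mp hK with rfl | hK
    · exact ⟨S, subset_rfl, a, ha, rfl⟩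
    · obtain ⟨S', hS', b, hb, rfl⟩ := ih hK
      have hCS : P.zeroPart (P.component S a) ⊆ S :=
        (Finset.filter_subset _ _).trans (Finset.filter_subset _ _)
      exact ⟨S', hS'.trans hCS, b, hb, rfl⟩

lemma self_mem_component {S : Finset V} {a : V} (ha : a ∈ S) : a ∈ P.component S a :=
  Finset.mem_filter.mpr ⟨ha, .refl⟩

lemma isIndecomposable_component {S : Finset V} (hS : S ⊆ P.roots) (a : V) :
    P.IsIndecomposable (P.component S a) := by
  intro T hTC hT horth
  have hlinked : ∀ x, P.Linked S a x → (x ∈ T ↔ a ∈ T) := by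
    intro x hx
    induction hx with
    | refl => rfl
    | @tail b c hab hbc ih =>
      obtain ⟨hbS, hcS, hbc⟩ := hbc
      have hbC : b ∈ P.component S a := Finset.mem_filter.mpr ⟨hbS, hab⟩
      have hcC : c ∈ P.component S a := Finset.mem_filter.mpr ⟨hcS, hab.tail ⟨hbS, hcS, hbc⟩⟩
      refine Iff.trans ⟨fun hc => ?_, fun hb => ?_⟩ ih <;> by_contra h
      · exact hbc ((pairInt_eq_zero_comm (hS hbS) (hS hcS)).mpr
          (horth c hc b (Finset.mem_sdiff.mpr ⟨hbC, h⟩)))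
      · exact hbc (horth b hb c (Finset.mem_sdiff.mpr ⟨hcC, h⟩))
  obtain ⟨t, ht⟩ := hT
  have haT : a ∈ T := (hlinked t (Finset.mem_filter.mp (hTC ht)).2).mp ht
  exact hTC.antisymm fun x hx => (hlinked x (Finset.mem_filter.mp hx).2).mpr haT

end Cascade

end RootSystemData

/-- Let `R` be a reduced root system with base `Π`, let `𝒦 = 𝒦(Π)` be the
cascade, and let `K ∈ 𝒦`.  If `α, β ∈ Γ^K` and `α + β ∈ R`, then `α + β = ε_K`. -/
theorem gamma_add_eq_highestRoot
    (P : RootSystemData k V) (Δ : Finset V) (hbase : P.IsBase Δ)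
    (K : Finset V) (hK : K ∈ P.cascade Δ)
    (α : V) (hα : α ∈ P.gamma K) (β : V) (hβ : β ∈ P.gamma K)
    (hsum : α + β ∈ P.roots) :
    α + β = P.highestRoot K := by
  obtain ⟨S, hSΔ, a, ha, rfl⟩ := P.exists_eq_component_of_mem_cascadeAux hK
  have hKΔ : P.component S a ⊆ Δ := (Finset.filter_subset _ _).trans hSΔ
  have hε := RootSystemData.isHighestRoot_highestRoot <|
    RootSystemData.exists_isHighestRoot hbase hKΔ ⟨a, RootSystemData.self_mem_component ha⟩
      (RootSystemData.isIndecomposable_component (hSΔ.trans hbase.subset) a)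
  obtain ⟨hαK, hαε⟩ := Finset.mem_filter.mp hα
  obtain ⟨hβK, hβε⟩ := Finset.mem_filter.mp hβ
  exact hε.add_eq_of_pairInt_pos hbase hKΔ hαK hβK hαε hβε hsum
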